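/- Let G be a perfect group and ρ : G → SU(2) a homomorphism such that ℂ² has no ρ(G)-invariant complex line. Then the conjugation representation of G on the 3-dimensional complex vector space of traceless 2×2 complex matrices, given by g·M = ρ(g) M ρ(g)⁻¹, is irreducible: the only invariant complex subspaces are 0 and the whole space. (This is the representation obtained by composing ρ with the map SU(2) → SO(3) ↪ SU(3).) -/

import Mathlib

open Matrix

section Aux

variable {G : Type*} [Group G]

private lemma trace_stdBasisMatrix_mul (i j : Fin 2) (x : Matrix (Fin 2) (Fin 2) ℂ) :
    (Matrix.single i j (1 : ℂ) * x).trace = x j i := by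
  have hdiag : ∀ k : Fin 2, (Matrix.single i j (1 : ℂ) * x) k k
      = if k = i then x j i else 0 := by
    intro k
    by_cases hk : k = i
    · subst hk
      simp
    · simp [Matrix.single_mul_apply_of_ne (c := (1 : ℂ)) i j k k hk x, hk]
  rw [Matrix.trace, Fin.sum_univ_two, Matrix.diag_apply, Matrix.diag_apply,
    hdiag 0, hdiag 1]
  fin_cases i <;> simp

private lemma rho_inv (ρ : G →* Matrix (Fin 2) (Fin 2) ℂ) (g : G) :
    (ρ g)⁻¹ = ρ g⁻¹ :=
  Matrix.inv_eq_right_inv (by rw [← _root_.map_mul, mul_inv_cancel, _root_.map_one])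

/-- Core lemma: there is no 1-dimensional invariant subspace of traceless matrices. -/
private lemma no_inv_line (hperf : commutator G = ⊤)
    (ρ : G →* Matrix (Fin 2) (Fin 2) ℂ)
    (hnoline : ¬ ∃ L : Submodule ℂ (Fin 2 → ℂ), Module.finrank ℂ L = 1 ∧
      ∀ g : G, ∀ v ∈ L, (ρ g).mulVec v ∈ L)
    (U : Submodule ℂ (Matrix (Fin 2) (Fin 2) ℂ))
    (hU1 : Module.finrank ℂ U = 1)
    (hUtr : U ≤ LinearMap.ker (Matrix.traceLinearMap (Fin 2) ℂ ℂ))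
    (hUinv : ∀ g : G, ∀ M ∈ U, ρ g * M * (ρ g)⁻¹ ∈ U) : False := by
  have hinv1 : ∀ g : G, ρ g⁻¹ * ρ g = 1 := fun g => by
    rw [← _root_.map_mul, inv_mul_cancel, _root_.map_one]
  have hinv2 : ∀ g : G, ρ g * ρ g⁻¹ = 1 := fun g => by
    rw [← _root_.map_mul, mul_inv_cancel, _root_.map_one]
  -- pick a nonzero element M spanning U
  have hUne : U ≠ ⊥ := by
    intro h; rw [h, finrank_bot] at hU1; omega
  obtain ⟨M, hMU, hM0⟩ := Submodule.exists_mem_ne_zero_of_ne_bot hUne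
  have hspan : Submodule.span ℂ {M} = U := by
    apply Submodule.eq_of_le_of_finrank_eq
    · rwa [Submodule.span_singleton_le_iff_mem]
    · rw [finrank_span_singleton hM0, hU1]
  -- the character
  have hc : ∀ g : G, ∃ a : ℂ, a • M = ρ g * M * (ρ g)⁻¹ := by
    intro g
    have := hUinv g M hMU
    rwa [← hspan, Submodule.mem_span_singleton] at this
  choose c hc using hc
  have hMsmul : ∀ a b : ℂ, a • M = b • M → a = b := by
    intro a b h
    exact smul_left_injective ℂ hM0 h
  have hundo : ∀ (g : G) (N : Matrix (Fin 2) (Fin 2) ℂ),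
      ρ g⁻¹ * (ρ g * N * (ρ g)⁻¹) * ρ g = N := by
    intro g N
    rw [rho_inv]
    calc ρ g⁻¹ * (ρ g * N * ρ g⁻¹) * ρ g
        = (ρ g⁻¹ * ρ g) * N * (ρ g⁻¹ * ρ g) := by noncomm_ring
      _ = N := by rw [hinv1, one_mul, mul_one]
  have hc0 : ∀ g : G, c g ≠ 0 := by
    intro g h
    apply hM0
    have h2 := hc g
    rw [h, zero_smul] at h2
    have := hundo g M
    rw [← h2, mul_zero, zero_mul] at this
    exact this.symm
  have hcmul : ∀ g h : G, c (g * h) = c g * c h := by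
    intro g h
    apply hMsmul
    rw [hc (g * h)]
    have : ρ (g * h) * M * (ρ (g * h))⁻¹ = ρ g * (ρ h * M * (ρ h)⁻¹) * (ρ g)⁻¹ := by
      rw [rho_inv, rho_inv, rho_inv, _root_.map_mul ρ g h,
        show (g * h)⁻¹ = h⁻¹ * g⁻¹ from mul_inv_rev g h, _root_.map_mul ρ h⁻¹ g⁻¹]
      noncomm_ring
    rw [this, ← hc h, Matrix.mul_smul, Matrix.smul_mul, ← hc g, smul_smul,
      mul_comm (c h) (c g)]
  let χ : G →* ℂˣ := MonoidHom.mk' (fun g => Units.mk0 (c g) (hc0 g))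
    (fun g h => by ext; exact hcmul g h)
  have hχ1 : ∀ g : G, c g = 1 := by
    intro g
    have hker : χ.ker = ⊤ := top_unique (hperf ▸ Abelianization.commutator_subset_ker χ)
    have : χ g = 1 := by rw [← MonoidHom.mem_ker, hker]; trivial
    exact congrArg Units.val this
  -- M commutes with all ρ g
  have hcomm : ∀ g : G, ρ g * M = M * ρ g := by
    intro g
    have h1 : ρ g * M * (ρ g)⁻¹ = M := by rw [← hc g, hχ1 g, one_smul]
    calc ρ g * M = (ρ g * M * (ρ g)⁻¹) * ρ g := by
          rw [rho_inv, mul_assoc, mul_assoc, hinv1, mul_one]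
      _ = M * ρ g := by rw [h1]
  -- Schur: M is scalar
  have : Nontrivial (Fin 2 → ℂ) := by infer_instance
  obtain ⟨μ, hμ⟩ := Module.End.exists_eigenvalue (Matrix.mulVecLin M)
  set E := Module.End.eigenspace (Matrix.mulVecLin M) μ with hE
  have hEne : E ≠ ⊥ := hμ
  have hEinv : ∀ g : G, ∀ v ∈ E, (ρ g).mulVec v ∈ E := by
    intro g v hv
    rw [hE, Module.End.mem_eigenspace_iff] at hv ⊢
    simp only [Matrix.mulVecLin_apply] at hv ⊢
    rw [Matrix.mulVec_mulVec, ← hcomm g, ← Matrix.mulVec_mulVec, hv, Matrix.mulVec_smul]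
  have hE1 : 0 < Module.finrank ℂ E := by
    rw [Module.finrank_pos_iff]
    exact Submodule.nontrivial_iff_ne_bot.mpr hEne
  have hE2 : Module.finrank ℂ E ≤ 2 := by
    have := Submodule.finrank_le E
    rwa [Module.finrank_fin_fun] at this
  have : Module.finrank ℂ E = 1 ∨ Module.finrank ℂ E = 2 := by omega
  rcases this with h | h
  · exact hnoline ⟨E, h, hEinv⟩
  · -- E = ⊤, so M = μ • 1, traceless, so M = 0
    have hEtop : E = ⊤ := Submodule.eq_top_of_finrank_eq (by rw [h, Module.finrank_fin_fun])
    have hMs : M = μ • (1 : Matrix (Fin 2) (Fin 2) ℂ) := by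
      apply Matrix.toLin'.injective
      apply LinearMap.ext
      intro v
      have hv : v ∈ E := hEtop ▸ Submodule.mem_top
      rw [hE, Module.End.mem_eigenspace_iff] at hv
      simp only [Matrix.mulVecLin_apply] at hv
      rw [Matrix.toLin'_apply, Matrix.toLin'_apply, hv, Matrix.smul_mulVec,
        Matrix.one_mulVec]
    have htr : Matrix.trace M = 0 := hUtr hMU
    rw [hMs, Matrix.trace_smul, Matrix.trace_one] at htr
    simp only [Fintype.card_fin, smul_eq_mul] at htr
    have hμ0 : μ = 0 := by
      rcases mul_eq_zero.mp htr with h' | h'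
      · exact h'
      · norm_num at h'
    rw [hμ0, zero_smul] at hMs
    exact hM0 hMs

end Aux

/-- If `G` is a perfect group and `ρ : G → SU(2)` is a homomorphism with no invariant
complex line in `ℂ²`, then the conjugation representation of `G` on the 3-dimensional
complex vector space of traceless `2×2` complex matrices (the composition of `ρ` with
`SU(2) → SO(3) ↪ SU(3)`) is irreducible. -/
theorem adjoint_rep_of_irreducible_su2_rep_is_irreducible
    (G : Type*) [Group G] (hperf : commutator G = ⊤)
    (ρ : G →* Matrix (Fin 2) (Fin 2) ℂ)
    (hSU : ∀ g : G, (ρ g)ᴴ * ρ g = 1 ∧ (ρ g).det = 1)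
    (hnoline : ¬ ∃ L : Submodule ℂ (Fin 2 → ℂ), Module.finrank ℂ L = 1 ∧
      ∀ g : G, ∀ v ∈ L, (ρ g).mulVec v ∈ L) :
    Module.finrank ℂ
      (LinearMap.ker (Matrix.traceLinearMap (Fin 2) ℂ ℂ)) = 3 ∧
    ∀ W : Submodule ℂ (Matrix (Fin 2) (Fin 2) ℂ),
      W ≤ LinearMap.ker (Matrix.traceLinearMap (Fin 2) ℂ ℂ) →
      (∀ g : G, ∀ M ∈ W, ρ g * M * (ρ g)⁻¹ ∈ W) →
      W = ⊥ ∨ W = LinearMap.ker (Matrix.traceLinearMap (Fin 2) ℂ ℂ) := by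
  have hinv1 : ∀ g : G, ρ g⁻¹ * ρ g = 1 := fun g => by
    rw [← _root_.map_mul, inv_mul_cancel, _root_.map_one]
  have hinv2 : ∀ g : G, ρ g * ρ g⁻¹ = 1 := fun g => by
    rw [← _root_.map_mul, mul_inv_cancel, _root_.map_one]
  have hker3 : Module.finrank ℂ
      (LinearMap.ker (Matrix.traceLinearMap (Fin 2) ℂ ℂ)) = 3 := by
    have hrn := LinearMap.finrank_range_add_finrank_ker (Matrix.traceLinearMap (Fin 2) ℂ ℂ)
    have hrange : LinearMap.range (Matrix.traceLinearMap (Fin 2) ℂ ℂ) = ⊤ := by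
      rw [LinearMap.range_eq_top]
      intro x
      exact ⟨Matrix.single (0 : Fin 2) (0 : Fin 2) x,
        Matrix.trace_single_eq_same (0 : Fin 2) x⟩
    rw [hrange, finrank_top, Module.finrank_self] at hrn
    have h4 : Module.finrank ℂ (Matrix (Fin 2) (Fin 2) ℂ) = 4 := by
      rw [Module.finrank_matrix]; simp
    rw [h4] at hrn
    omega
  refine ⟨hker3, ?_⟩
  intro W hle hinv
  have hW3 : Module.finrank ℂ W ≤ 3 := by
    have := Submodule.finrank_mono hle
    omega
  have hcases : Module.finrank ℂ W = 0 ∨ Module.finrank ℂ W = 1 ∨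
      Module.finrank ℂ W = 2 ∨ Module.finrank ℂ W = 3 := by omega
  rcases hcases with h | h | h | h
  · left; exact Submodule.finrank_eq_zero.mp h
  · exact (no_inv_line hperf ρ hnoline W h hle hinv).elim
  · -- dimension 2: pass to the orthogonal complement of W ⊔ ℂ·1 for the trace form
    exfalso
    classical
    set Bf : LinearMap.BilinForm ℂ (Matrix (Fin 2) (Fin 2) ℂ) :=
      LinearMap.mk₂ ℂ (fun X Y => (X * Y).trace)
        (fun X X' Y => by simp [add_mul])
        (fun a X Y => by simp [Matrix.smul_mul])
        (fun X Y Y' => by simp [mul_add])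
        (fun a X Y => by simp [Matrix.mul_smul]) with hBf
    have hBapp : ∀ X Y, Bf X Y = (X * Y).trace := fun X Y => rfl
    have hsymm : ∀ X Y, Bf X Y = Bf Y X := by
      intro X Y; rw [hBapp, hBapp, Matrix.trace_mul_comm]
    have hrefl : Bf.IsRefl := fun X Y h => by rw [hsymm]; exact h
    have hnd : Bf.Nondegenerate := by
      refine ⟨fun x hx => ?_, fun x hx => ?_⟩
      · ext i j
        have := hx (Matrix.single j i 1)
        rw [hBapp, Matrix.trace_mul_comm, trace_stdBasisMatrix_mul] at this
        simpa using this
      · ext i j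
        have := hx (Matrix.single j i 1)
        rw [hBapp, trace_stdBasisMatrix_mul] at this
        simpa using this
    set S := Submodule.span ℂ {(1 : Matrix (Fin 2) (Fin 2) ℂ)} with hS
    set Wt := W ⊔ S with hWt
    have h1Wt : (1 : Matrix (Fin 2) (Fin 2) ℂ) ∈ Wt :=
      Submodule.mem_sup_right (Submodule.mem_span_singleton_self 1)
    -- Wt is invariant
    have hWtinv : ∀ g : G, ∀ y ∈ Wt, ρ g * y * (ρ g)⁻¹ ∈ Wt := by
      intro g y hy
      rw [hWt] at hy ⊢
      obtain ⟨w, hw, s, hs, rfl⟩ := Submodule.mem_sup.mp hy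
      obtain ⟨a, rfl⟩ := Submodule.mem_span_singleton.mp hs
      refine Submodule.mem_sup.mpr ⟨ρ g * w * (ρ g)⁻¹, hinv g w hw,
        a • (1 : Matrix (Fin 2) (Fin 2) ℂ), Submodule.smul_mem _ a
          (Submodule.mem_span_singleton_self 1), ?_⟩
      rw [rho_inv]
      rw [mul_add, add_mul]
      congr 1
      rw [Matrix.mul_smul, Matrix.smul_mul, mul_one, hinv2]
    -- dimensions
    have hWS : W ⊓ S = ⊥ := by
      rw [Submodule.eq_bot_iff]
      rintro x ⟨hxW, hxS⟩
      obtain ⟨a, rfl⟩ := Submodule.mem_span_singleton.mp hxS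
      have : Matrix.trace (a • (1 : Matrix (Fin 2) (Fin 2) ℂ)) = 0 := hle hxW
      rw [Matrix.trace_smul, Matrix.trace_one] at this
      simp only [Fintype.card_fin, smul_eq_mul] at this
      have ha : a = 0 := by
        have h' : a * (2 : ℂ) = 0 := by exact_mod_cast this
        rcases mul_eq_zero.mp h' with h'' | h''
        · exact h''
        · norm_num at h''
      rw [ha, zero_smul]
    have hSfr : Module.finrank ℂ S = 1 :=
      finrank_span_singleton (one_ne_zero (α := Matrix (Fin 2) (Fin 2) ℂ))
    have hWtfr : Module.finrank ℂ Wt = 3 := by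
      have := Submodule.finrank_sup_add_finrank_inf_eq W S
      rw [hWS, finrank_bot, hSfr, h] at this
      rw [hWt]
      omega
    set U := Bf.orthogonal Wt with hU
    have hUfr : Module.finrank ℂ U = 1 := by
      rw [hU, LinearMap.BilinForm.finrank_orthogonal hnd, hWtfr]
      rw [Module.finrank_matrix]; simp
    have hUtr : U ≤ LinearMap.ker (Matrix.traceLinearMap (Fin 2) ℂ ℂ) := by
      intro u hu
      have := hu 1 h1Wt
      rw [hBapp, one_mul] at this
      exact this
    have hUinv : ∀ g : G, ∀ u ∈ U, ρ g * u * (ρ g)⁻¹ ∈ U := by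
      intro g u hu
      intro n hn
      have hn' : ρ g⁻¹ * n * ρ g ∈ Wt := by
        have := hWtinv g⁻¹ n hn
        rwa [rho_inv, inv_inv] at this
      have h0 : Bf (ρ g⁻¹ * n * ρ g) u = 0 := hu _ hn'
      rw [hBapp]
      rw [hBapp] at h0
      rw [rho_inv]
      calc (n * (ρ g * u * ρ g⁻¹)).trace
          = ((ρ g⁻¹ * n * ρ g) * u).trace := by
            rw [show n * (ρ g * u * ρ g⁻¹) = (n * ρ g * u) * ρ g⁻¹ by noncomm_ring,
              Matrix.trace_mul_comm, show ρ g⁻¹ * (n * ρ g * u) = (ρ g⁻¹ * n * ρ g) * u by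
                noncomm_ring]
        _ = 0 := h0
    exact no_inv_line hperf ρ hnoline U hUfr hUtr hUinv
  · right
    exact Submodule.eq_of_le_of_finrank_eq hle (by rw [h, hker3])
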